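/- Let W be an elementary (n × n)-wall with n ≥ 7. Then mimw(W) ≥ √n / 50. -/

import Mathlib

open SimpleGraph

/-- `M` is an induced matching in the bipartite graph `G[X,Y]`: every pair in `M` is an
edge of `G` with first endpoint in `X` and second endpoint in `Y`, the pairs are pairwise
vertex-disjoint, and no edge of `G` between `X` and `Y` joins vertices incident to
distinct pairs of `M`. -/
def IsInducedCutMatching {V : Type*} (G : SimpleGraph V) (X Y : Set V)
    (M : Finset (V × V)) : Prop :=
  (∀ p ∈ M, p.1 ∈ X ∧ p.2 ∈ Y ∧ G.Adj p.1 p.2) ∧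
  ∀ p ∈ M, ∀ q ∈ M, p ≠ q →
    p.1 ≠ q.1 ∧ p.2 ≠ q.2 ∧ p.1 ≠ q.2 ∧ p.2 ≠ q.1 ∧
    ¬ G.Adj p.1 q.2 ∧ ¬ G.Adj q.1 p.2

/-- `cutmim G X Y` is the maximum size of an induced matching in `G[X,Y]`. -/
noncomputable def cutmim {V : Type*} (G : SimpleGraph V) (X Y : Set V) : ℕ :=
  sSup {n : ℕ | ∃ M : Finset (V × V), IsInducedCutMatching G X Y M ∧ M.card = n}

/-- A branch decomposition of a graph `G`: a finite tree `T` of maximum degree at most 3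
together with a bijection `δ` from the vertices of `G` to the leaves of `T`. -/
structure BranchDecomp {V : Type*} (G : SimpleGraph V) where
  L : Type
  T : SimpleGraph L
  finite : Finite L
  connected : T.Connected
  acyclic : T.IsAcyclic
  subcubic : ∀ x : L, (T.neighborSet x).ncard ≤ 3
  δ : V → L
  δ_inj : Function.Injective δ
  δ_leaf : ∀ v : V, (T.neighborSet (δ v)).ncard = 1
  δ_surj : ∀ x : L, (T.neighborSet x).ncard = 1 → ∃ v : V, δ v = x

/-- The side of the cut of `V(G)` induced by the tree edge `ab`: the set of vertices of
`G` mapped by `δ` into the component of `T - ab` containing `a`. -/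
def BranchDecomp.side {V : Type*} {G : SimpleGraph V} (B : BranchDecomp G)
    (a b : B.L) : Set V :=
  {v : V | (B.T.deleteEdges {s(a, b)}).Reachable (B.δ v) a}

/-- The mim-width of a branch decomposition: the maximum over tree edges `ab` of
`cutmim G (A_e, V(G) \ A_e)`. -/
noncomputable def BranchDecomp.width {V : Type*} {G : SimpleGraph V}
    (B : BranchDecomp G) : ℕ :=
  sSup {n : ℕ | ∃ a b : B.L, B.T.Adj a b ∧ n = cutmim G (B.side a b) (B.side a b)ᶜ}

/-- The mim-width of a graph: the minimum width over all branch decompositions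
(by convention `0` if no branch decomposition exists, e.g. for graphs with fewer
than two vertices). -/
noncomputable def mimw {V : Type*} (G : SimpleGraph V) : ℕ :=
  sInf {n : ℕ | ∃ B : BranchDecomp G, B.width = n}

/-- `G` is `H`-free: no induced subgraph of `G` is isomorphic to `H`. -/
def HFree {V W : Type*} (G : SimpleGraph V) (H : SimpleGraph W) : Prop :=
  ¬ ∃ S : Set V, Nonempty ((G.induce S) ≃g H)

/-- The disjoint union of two graphs. -/
def sumGraph {α β : Type*} (G : SimpleGraph α) (H : SimpleGraph β) :
    SimpleGraph (α ⊕ β) :=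
  SimpleGraph.fromRel (fun a b =>
    (∃ x y, a = Sum.inl x ∧ b = Sum.inl y ∧ G.Adj x y) ∨
    (∃ x y, a = Sum.inr x ∧ b = Sum.inr y ∧ H.Adj x y))

/-- `tP₂`: the disjoint union of `t` single edges. -/
def tP2graph (t : ℕ) : SimpleGraph (Fin t × Fin 2) :=
  SimpleGraph.fromRel (fun a b => a.1 = b.1)

/-- `sP₁ + P₂`: `s` isolated vertices together with a single edge. -/
def sP1P2graph (s : ℕ) : SimpleGraph (Fin s ⊕ Fin 2) :=
  SimpleGraph.fromRel (fun a b => ∃ i j : Fin 2, a = Sum.inr i ∧ b = Sum.inr j)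

/-- `K_r ⊟ K_r`: two disjoint copies of `K_r` joined by a perfect matching. -/
def KboxK (r : ℕ) : SimpleGraph (Fin r ⊕ Fin r) :=
  SimpleGraph.fromRel (fun a b =>
    (∃ i j, a = Sum.inl i ∧ b = Sum.inl j) ∨
    (∃ i j, a = Sum.inr i ∧ b = Sum.inr j) ∨
    (∃ i, a = Sum.inl i ∧ b = Sum.inr i))

/-- `K_r ⊟ rP₁`: a clique `a_1, …, a_r`, an independent set `b_1, …, b_r`, and the
matching edges `a_i b_i`. -/
def KboxI (r : ℕ) : SimpleGraph (Fin r ⊕ Fin r) :=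
  SimpleGraph.fromRel (fun a b =>
    (∃ i j, a = Sum.inl i ∧ b = Sum.inl j) ∨
    (∃ i, a = Sum.inl i ∧ b = Sum.inr i))

/-- `K_r ⊟ P₁`: `K_r` plus a pendant vertex attached to exactly one vertex of `K_r`. -/
def KboxP1 (r : ℕ) : SimpleGraph (Fin r ⊕ Unit) :=
  SimpleGraph.fromRel (fun a b =>
    (∃ i j : Fin r, a = Sum.inl i ∧ b = Sum.inl j) ∨
    (∃ i : Fin r, i.val = 0 ∧ a = Sum.inl i ∧ b = Sum.inr ()))

/-- The claw `K_{1,3}`: vertex `0` adjacent to the three leaves `1`, `2`, `3`. -/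
def clawGraph : SimpleGraph (Fin 4) :=
  SimpleGraph.fromRel (fun a _ => a = 0)

/-- The diamond: `K_4` minus the edge `{2,3}`. -/
def diamondGraph : SimpleGraph (Fin 4) :=
  SimpleGraph.fromRel (fun a b => ¬(a = 2 ∧ b = 3) ∧ ¬(a = 3 ∧ b = 2))

/-- The bowtie `⋈`: two triangles `{0,1,2}` and `{0,3,4}` sharing the vertex `0`. -/
def bowtieGraph : SimpleGraph (Fin 5) :=
  SimpleGraph.fromRel (fun a b => a = 0 ∨ (a = 1 ∧ b = 2) ∨ (a = 3 ∧ b = 4))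

/-- `P₁ + 2P₂`: the isolated vertex `0` and the two disjoint edges `12` and `34`. -/
def P1plus2P2graph : SimpleGraph (Fin 5) :=
  SimpleGraph.fromRel (fun a b => (a = 1 ∧ b = 2) ∨ (a = 3 ∧ b = 4))

/-- The subdivided claw `S_{1,1,5}`: centre `0` with leaves `1`, `2` at distance one and
the path `0-3-4-5-6-7`. -/
def S115graph : SimpleGraph (Fin 8) :=
  SimpleGraph.fromRel (fun a b =>
    (a = 0 ∧ b = 1) ∨ (a = 0 ∧ b = 2) ∨ (a = 0 ∧ b = 3) ∨
    (a = 3 ∧ b = 4) ∨ (a = 4 ∧ b = 5) ∨ (a = 5 ∧ b = 6) ∨ (a = 6 ∧ b = 7))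

/-- The Ramsey number `R(a,b)`: the least `N` such that every graph on at least `N`
vertices contains a clique of size `a` or an independent set of size `b`. -/
noncomputable def ramsey (a b : ℕ) : ℕ :=
  sInf {N : ℕ | ∀ M : ℕ, N ≤ M → ∀ G : SimpleGraph (Fin M),
    (∃ s : Finset (Fin M), G.IsNClique a s) ∨ (∃ s : Finset (Fin M), Gᶜ.IsNClique b s)}

/-- The `h × 2r` grid with the vertical edges prescribed by the wall construction:
the vertical edge between rows `i` and `i+1` of column `j` (all `0`-indexed) is kept
exactly when `i ≡ j (mod 2)`. -/
def wallPre (h r : ℕ) : SimpleGraph (Fin h × Fin (2 * r)) :=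
  SimpleGraph.fromRel (fun a b =>
    (a.1 = b.1 ∧ (a.2 : ℕ) + 1 = (b.2 : ℕ)) ∨
    (a.2 = b.2 ∧ (a.1 : ℕ) + 1 = (b.1 : ℕ) ∧ (a.1 : ℕ) % 2 = (a.2 : ℕ) % 2))

/-- The elementary `(h × r)`-wall: delete from `wallPre h r` all vertices of degree 1. -/
def elementaryWall (h r : ℕ) :
    SimpleGraph {v : Fin h × Fin (2 * r) // ((wallPre h r).neighborSet v).ncard ≠ 1} :=
  (wallPre h r).induce {v | ((wallPre h r).neighborSet v).ncard ≠ 1}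

/-- The graph obtained from `W` by simultaneously performing a clique implant on every
vertex of degree `3`: a degree-3 vertex `v` is replaced by the triangle of vertices
`(v, some u)` for `u` a neighbour of `v`, and `(v, some u)` inherits the edge of `v`
towards `u`; vertices of degree `≠ 3` are kept as `(v, none)`. -/
def cliqueImplantAll {V : Type*} (W : SimpleGraph V) :
    SimpleGraph {p : V × Option V //
      (p.2 = none ∧ (W.neighborSet p.1).ncard ≠ 3) ∨
      (∃ u, p.2 = some u ∧ (W.neighborSet p.1).ncard = 3 ∧ W.Adj p.1 u)} :=
  SimpleGraph.fromRel (fun a b =>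
    (a.1.1 = b.1.1 ∧ a.1.2 ≠ b.1.2) ∨
    (W.Adj a.1.1 b.1.1 ∧ (a.1.2 = none ∨ a.1.2 = some b.1.1) ∧
      (b.1.2 = none ∨ b.1.2 = some a.1.1)))

/-- A net-wall: the graph obtained from the elementary `(n × n)`-wall by performing a
clique implant on every vertex of degree `3`. -/
def netWall (n : ℕ) := cliqueImplantAll (elementaryWall n n)

/-- The chordal bipartite graph `G'` of Brault-Baron, Capelli and Mengel, built from a
graph `G`: vertices `x_v` (`Sum.inl v`), `y_v` (`Sum.inr (Sum.inl v)`), and for every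
ordered adjacent pair `p = (u,v)` two vertices `q_p = (p,0)` and `t_p = (p,1)`;
`X` is complete to `Y`, and for each adjacent pair `(u,v)` there is a path
`x_u - q_{(u,v)} - t_{(u,v)} - y_v`. -/
def BCMgraph {V : Type*} (G : SimpleGraph V) :
    SimpleGraph (V ⊕ V ⊕ ({p : V × V // G.Adj p.1 p.2} × Fin 2)) :=
  SimpleGraph.fromRel (fun a b =>
    (∃ u w : V, a = Sum.inl u ∧ b = Sum.inr (Sum.inl w)) ∨
    (∃ p : {p : V × V // G.Adj p.1 p.2},
      a = Sum.inl p.1.1 ∧ b = Sum.inr (Sum.inr (p, 0))) ∨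
    (∃ p : {p : V × V // G.Adj p.1 p.2},
      a = Sum.inr (Sum.inr (p, 0)) ∧ b = Sum.inr (Sum.inr (p, 1))) ∨
    (∃ p : {p : V × V // G.Adj p.1 p.2},
      a = Sum.inr (Sum.inr (p, 1)) ∧ b = Sum.inr (Sum.inl p.1.2)))


/-!
A branch decomposition has an edge whose cut `(X, Xᶜ)` is balanced: both sides hold at least a
third of the vertices. So it suffices to find an induced matching of size `t = ⌈√n / 50⌉` across
every balanced cut of the wall. Call a row mixed if its interior meets both `X` and `Xᶜ`. If at
least `2t - 1` rows are mixed, every other mixed row contains a crossing horizontal edge, and these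
edges lie two rows apart. Otherwise balance forces a row with interior in `X` and one with
interior in `Xᶜ`; for the closest such pair every row in between is mixed, so they are at most
`2t - 1` rows apart, and `t` staircases joining them, `2t + 2` columns apart, each contain a
crossing edge.
-/

lemma Nat.exists_flip_of_not_iff {p : ℕ → Prop} : ∀ {m : ℕ}, ¬(p 0 ↔ p m) →
    ∃ k < m, ¬(p k ↔ p (k + 1))
  | 0, h => absurd Iff.rfl h
  | m + 1, h => by
    by_cases hm : p m ↔ p (m + 1)
    · obtain ⟨k, hk, hflip⟩ := Nat.exists_flip_of_not_iff (fun h0 => h (h0.trans hm))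
      exact ⟨k, by omega, hflip⟩
    · exact ⟨m, by omega, hm⟩

lemma Finset.exists_sparse_family (M : Finset ℕ) {t : ℕ} (ht : 2 * t ≤ M.card + 1) :
    ∃ r : Fin t → ℕ, (∀ k, r k ∈ M) ∧ ∀ k l, k < l → r k + 2 ≤ r l := by
  let e := M.orderEmbOfFin rfl
  have hlt : ∀ k : Fin t, 2 * (k : ℕ) < M.card := fun k => by omega
  refine ⟨fun k => e ⟨2 * k, hlt k⟩, fun k => M.orderEmbOfFin_mem rfl _, fun k l hkl => ?_⟩
  have hkl' : (k : ℕ) < l := hkl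
  have h1 : e ⟨2 * k, hlt k⟩ < e ⟨2 * k + 1, by omega⟩ := e.strictMono (by simp [Fin.lt_def])
  have h2 : e ⟨2 * k + 1, by omega⟩ < e ⟨2 * l, hlt l⟩ :=
    e.strictMono (by simp only [Fin.lt_def]; omega)
  show e ⟨2 * k, hlt k⟩ + 2 ≤ e ⟨2 * l, hlt l⟩
  omega

lemma Nat.exists_close_pair {P Q : ℕ → Prop} (hP : ∃ p, P p) (hQ : ∃ q, Q q) :
    ∃ p q, P p ∧ Q q ∧ ∀ r, min p q < r → r < max p q → ¬P r ∧ ¬Q r := by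
  classical
  have hex : ∃ d p q, P p ∧ Q q ∧ max p q - min p q = d :=
    ⟨_, hP.choose, hQ.choose, hP.choose_spec, hQ.choose_spec, rfl⟩
  obtain ⟨p, q, hp, hq, hd⟩ := Nat.find_spec hex
  refine ⟨p, q, hp, hq, fun r h1 h2 => ⟨fun hr => ?_, fun hr => ?_⟩⟩
  · exact absurd (Nat.find_min' hex ⟨r, q, hr, hq, rfl⟩) (by omega)
  · exact absurd (Nat.find_min' hex ⟨p, r, hp, hr, rfl⟩) (by omega)

lemma Finset.card_le_natCard {α : Type*} [Finite α] (s : Finset α) : s.card ≤ Nat.card α := by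
  have := Fintype.ofFinite α
  simpa [Nat.card_eq_fintype_card] using s.card_le_univ

section CutMatching

variable {V : Type*} {G : SimpleGraph V}

lemma cutmim_le_natCard [Finite V] (X Y : Set V) : cutmim G X Y ≤ Nat.card (V × V) :=
  csSup_le' <| by rintro _ ⟨M, -, rfl⟩; exact M.card_le_natCard

lemma le_cutmim [Finite V] {X Y : Set V} {M : Finset (V × V)}
    (hM : IsInducedCutMatching G X Y M) : M.card ≤ cutmim G X Y :=
  le_csSup ⟨_, by rintro _ ⟨M, -, rfl⟩; exact M.card_le_natCard⟩ ⟨M, hM, rfl⟩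

lemma le_cutmim_of_crossing_edges [Finite V] {X : Set V} {t : ℕ} (u w : Fin t → V)
    (hadj : ∀ k, G.Adj (u k) (w k)) (hcross : ∀ k, ¬(u k ∈ X ↔ w k ∈ X))
    (hsep : ∀ k l, k < l → ∀ x ∈ ({u k, w k} : Set V), ∀ y ∈ ({u l, w l} : Set V),
      x ≠ y ∧ ¬G.Adj x y) :
    t ≤ cutmim G X Xᶜ := by
  classical
  let e : Fin t → V × V := fun k => if u k ∈ X then (u k, w k) else (w k, u k)
  have he : ∀ k, ((e k).1 ∈ X ∧ (e k).2 ∉ X ∧ G.Adj (e k).1 (e k).2) ∧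
      (e k).1 ∈ ({u k, w k} : Set V) ∧ (e k).2 ∈ ({u k, w k} : Set V) := fun k => by
    by_cases hk : u k ∈ X <;> simp only [e, hk, if_true, if_false] <;>
      have := hcross k <;> simp_all [(hadj k).symm]
  have hsep' : ∀ k l, k ≠ l → ∀ x ∈ ({u k, w k} : Set V), ∀ y ∈ ({u l, w l} : Set V),
      x ≠ y ∧ ¬G.Adj x y := fun k l hkl x hx y hy => by
    rcases lt_or_gt_of_ne hkl with h | h
    · exact hsep k l h x hx y hy
    · exact (hsep l k h y hy x hx).imp Ne.symm (fun h' h'' => h' h''.symm)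
  have hinj : Function.Injective e := fun k l hkl => by
    by_contra hne
    exact (hsep' k l hne _ (he k).2.1 _ (he l).2.1).1 (congrArg Prod.fst hkl)
  have hM : IsInducedCutMatching G X Xᶜ (Finset.univ.image e) := by
    refine ⟨?_, ?_⟩
    · simp only [Finset.mem_image, Finset.mem_univ, true_and, forall_exists_index]
      rintro _ k rfl
      exact (he k).1
    · simp only [Finset.mem_image, Finset.mem_univ, true_and, forall_exists_index]
      rintro _ k rfl _ l rfl hkl
      have hne : k ≠ l := fun h => hkl (h ▸ rfl)
      have h11 := hsep' k l hne _ (he k).2.1 _ (he l).2.1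
      have h22 := hsep' k l hne _ (he k).2.2 _ (he l).2.2
      have h12 := hsep' k l hne _ (he k).2.1 _ (he l).2.2
      have h21 := hsep' k l hne _ (he k).2.2 _ (he l).2.1
      have h21' := hsep' l k hne.symm _ (he l).2.1 _ (he k).2.2
      exact ⟨h11.1, h22.1, h12.1, h21.1, h12.2, h21'.2⟩
  simpa [Finset.card_image_of_injective _ hinj] using le_cutmim hM

end CutMatching

namespace SimpleGraph

variable {L : Type*} {T : SimpleGraph L} {a b c x : L}

def edgeSide (T : SimpleGraph L) (a b : L) : Set L :=
  {x | (T.deleteEdges {s(a, b)}).Reachable x a}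

lemma mem_edgeSide_self : a ∈ T.edgeSide a b := Reachable.refl a

lemma reachable_deleteEdges_of_notMem_support {H : SimpleGraph L} (hH : H ≤ T) {y : L}
    (p : H.Walk x y) (ha : a ∉ p.support) (b : L) :
    (T.deleteEdges {s(a, b)}).Reachable x y := by
  refine ⟨(p.mapLe hH).toDeleteEdges _ fun e he hab => ha ?_⟩
  rw [Set.mem_singleton_iff.mp hab] at he
  simpa [Walk.mapLe, Walk.support_map] using (p.mapLe hH).fst_mem_support_of_mem_edges he

lemma edgeSide_union_edgeSide (hT : T.Connected) (a b : L) :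
    T.edgeSide a b ∪ T.edgeSide b a = Set.univ := by
  refine Set.eq_univ_of_forall fun x => by_contra fun hx => ?_
  obtain ⟨d, -, hd, hd'⟩ := ((hT a x).some).exists_boundary_dart _
    (Or.inl mem_edgeSide_self) hx
  by_cases he : s(d.fst, d.snd) = s(a, b)
  · rcases Sym2.eq_iff.mp he with ⟨-, h⟩ | ⟨-, h⟩
    · exact hd' (Or.inr (h ▸ mem_edgeSide_self))
    · exact hd' (Or.inl (h ▸ mem_edgeSide_self))
  · have hadj : (T.deleteEdges {s(a, b)}).Adj d.snd d.fst :=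
      deleteEdges_adj.mpr ⟨d.adj.symm, by rwa [Set.mem_singleton_iff, Sym2.eq_swap (a := d.snd)]⟩
    have hadj' : (T.deleteEdges {s(b, a)}).Adj d.snd d.fst := by
      rwa [Sym2.eq_swap]
    rcases hd with hd | hd
    · exact hd' (Or.inl (hadj.reachable.trans hd))
    · exact hd' (Or.inr (hadj'.reachable.trans hd))

lemma notMem_edgeSide (hT : T.IsAcyclic) (hab : T.Adj a b) : b ∉ T.edgeSide a b :=
  fun h => isBridge_iff.mp (isAcyclic_iff_forall_adj_isBridge.mp hT hab) h.symm

lemma edgeSide_ssubset (hT : T.IsAcyclic) (hab : T.Adj a b) (hca : T.Adj c a) (hcb : c ≠ b) :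
    T.edgeSide c a ⊂ T.edgeSide a b := by
  classical
  have ha := notMem_edgeSide hT hca
  refine Set.ssubset_iff_subset_ne.mpr ⟨fun y ⟨p⟩ => ?_, fun h => ha (h ▸ mem_edgeSide_self)⟩
  have hp : a ∉ p.support := fun h => ha ⟨p.dropUntil a h⟩
  have hca' : (T.deleteEdges {s(a, b)}).Adj c a := by
    refine deleteEdges_adj.mpr ⟨hca, fun h => ?_⟩
    rcases Sym2.eq_iff.mp (Set.mem_singleton_iff.mp h) with ⟨rfl, -⟩ | ⟨rfl, -⟩
    exacts [hca.ne rfl, hcb rfl]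
  exact (reachable_deleteEdges_of_notMem_support (deleteEdges_le _) p hp b).trans
    hca'.reachable

lemma exists_adj_mem_edgeSide (hx : x ∈ T.edgeSide a b) (hxa : x ≠ a) :
    ∃ c, T.Adj a c ∧ c ≠ b ∧ x ∈ T.edgeSide c a := by
  obtain ⟨p, hp⟩ := hx.symm.exists_isPath
  obtain ⟨c, hac, q, rfl⟩ := p.exists_eq_cons_of_ne (Ne.symm hxa)
  obtain ⟨hac, hne⟩ := deleteEdges_adj.mp hac
  refine ⟨c, hac, fun hcb => hne (by simp [hcb]), ?_⟩
  have hq := reachable_deleteEdges_of_notMem_support (deleteEdges_le _) q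
    ((Walk.cons_isPath_iff _ _).mp hp).2 c
  rw [Sym2.eq_swap] at hq
  exact hq.symm

lemma isBridge_of_forall_cross {S : Set L} {u v : L}
    (hu : u ∈ S) (hv : v ∉ S)
    (hcut : ∀ x y, T.Adj x y → x ∈ S → y ∉ S → s(x, y) = s(u, v)) : T.IsBridge s(u, v) := by
  refine isBridge_iff.mpr fun ⟨p⟩ => ?_
  obtain ⟨d, -, hd, hd'⟩ := p.exists_boundary_dart S hu hv
  obtain ⟨hadj, hne⟩ := deleteEdges_adj.mp d.adj
  exact hne (hcut _ _ hadj hd hd')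

end SimpleGraph

namespace BranchDecomp

variable {V : Type*} {G : SimpleGraph V} (B : BranchDecomp G)

lemma side_eq_preimage (a b : B.L) : B.side a b = B.δ ⁻¹' B.T.edgeSide a b := rfl

lemma exists_heavy_adj [Finite V] (hV : 2 ≤ Nat.card V) {a b : B.L} (hab : B.T.Adj a b)
    (hheavy : 2 * Nat.card V < 3 * (B.side a b).ncard) :
    ∃ c, B.T.Adj c a ∧ c ≠ b ∧ Nat.card V ≤ 3 * (B.side c a).ncard := by
  by_cases hleaf : ∃ v, B.δ v = a
  · obtain ⟨v, rfl⟩ := hleaf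
    obtain ⟨z, hz⟩ := Set.ncard_eq_one.mp (B.δ_leaf v)
    have hsub : B.side (B.δ v) b ⊆ {v} := fun u hu => by
      by_contra huv
      obtain ⟨c, hac, hcb, -⟩ := exists_adj_mem_edgeSide hu (B.δ_inj.ne huv)
      have hbz : b = z := by simpa [hz] using (show b ∈ B.T.neighborSet (B.δ v) from hab)
      have hcz : c = z := by simpa [hz] using (show c ∈ B.T.neighborSet (B.δ v) from hac)
      exact hcb (hcz.trans hbz.symm)
    have := Set.ncard_le_ncard hsub
    simp only [Set.ncard_singleton] at this
    omega
  · push Not at hleaf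
    by_contra! hlight
    have := B.finite
    let F := (Set.toFinite (B.T.neighborSet a \ {b})).toFinset
    have hF : F.card ≤ 2 := by
      have h3 := B.subcubic a
      have h1 := Set.ncard_sdiff_singleton_of_mem (show b ∈ B.T.neighborSet a from hab)
      rw [← Set.ncard_eq_toFinset_card]
      omega
    have hcover : B.side a b ⊆ ⋃ c ∈ F, B.side c a := fun u hu => by
      obtain ⟨c, hac, hcb, hu⟩ := exists_adj_mem_edgeSide hu (hleaf u)
      exact Set.mem_biUnion (by simpa [F] using ⟨hac, hcb⟩) hu
    have hsum : ∑ c ∈ F, 3 * (B.side c a).ncard ≤ F.card • (Nat.card V - 1) :=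
      Finset.sum_le_card_nsmul _ _ _ fun c hc => by
        have hc : B.T.Adj a c ∧ c ≠ b := by simpa [F] using hc
        have := hlight c hc.1.symm hc.2
        omega
    have := (Set.ncard_le_ncard hcover).trans (F.set_ncard_biUnion_le _)
    rw [← Finset.mul_sum, smul_eq_mul] at hsum
    have := Nat.mul_le_mul_right (Nat.card V - 1) hF
    omega

theorem exists_balanced_edge [Finite V] (hV : 2 ≤ Nat.card V) :
    ∃ a b, B.T.Adj a b ∧ Nat.card V ≤ 3 * (B.side a b).ncard ∧
      Nat.card V ≤ 3 * (B.side a b)ᶜ.ncard := by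
  have := B.finite
  obtain ⟨v⟩ : Nonempty V := Nat.card_pos_iff.mp (by omega) |>.1
  obtain ⟨z, hz⟩ := Set.ncard_eq_one.mp (B.δ_leaf v)
  have hvz : B.T.Adj (B.δ v) z := show z ∈ B.T.neighborSet (B.δ v) by simp [hz]
  have hstart : ∃ a b, B.T.Adj a b ∧ Nat.card V ≤ 3 * (B.side a b).ncard := by
    have hcover : B.side (B.δ v) z ∪ B.side z (B.δ v) = Set.univ := by
      simp only [side_eq_preimage, ← Set.preimage_union,
        B.T.edgeSide_union_edgeSide B.connected, Set.preimage_univ]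
    have := Set.ncard_union_le (B.side (B.δ v) z) (B.side z (B.δ v))
    rw [hcover, Set.ncard_univ] at this
    by_cases h : Nat.card V ≤ 3 * (B.side (B.δ v) z).ncard
    exacts [⟨_, _, hvz, h⟩, ⟨_, _, hvz.symm, by omega⟩]
  obtain ⟨a, b, hab, hheavy⟩ := hstart
  induction hm : (B.T.edgeSide a b).ncard using Nat.strong_induction_on generalizing a b with
  | _ m ih =>
    by_cases hlight : 3 * (B.side a b).ncard ≤ 2 * Nat.card V
    · have := Set.ncard_add_ncard_compl (B.side a b)
      exact ⟨a, b, hab, hheavy, by omega⟩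
    · obtain ⟨c, hca, hcb, hc⟩ := B.exists_heavy_adj hV hab (by omega)
      exact ih _ (hm ▸ Set.ncard_lt_ncard (edgeSide_ssubset B.acyclic hab hca hcb)) c a hca hc rfl

end BranchDecomp

def caterpillar (N : ℕ) : SimpleGraph (Fin N ⊕ Fin N) where
  Adj
    | .inl i, .inl j => (i : ℕ) + 1 = j ∨ (j : ℕ) + 1 = i
    | .inl i, .inr j | .inr i, .inl j => i = j
    | .inr _, .inr _ => False
  symm := ⟨by rintro (i | i) (j | j) h <;> simp_all [or_comm, eq_comm]⟩
  loopless := ⟨by rintro (i | i) h <;> simp_all⟩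

namespace caterpillar

variable {N : ℕ}

@[simp] lemma adj_inl_inl {i j : Fin N} :
    (caterpillar N).Adj (.inl i) (.inl j) ↔ (i : ℕ) + 1 = j ∨ (j : ℕ) + 1 = i := Iff.rfl

@[simp] lemma adj_inl_inr {i j : Fin N} : (caterpillar N).Adj (.inl i) (.inr j) ↔ i = j :=
  Iff.rfl

@[simp] lemma adj_inr_inl {i j : Fin N} : (caterpillar N).Adj (.inr i) (.inl j) ↔ i = j :=
  Iff.rfl

@[simp] lemma not_adj_inr_inr {i j : Fin N} : ¬(caterpillar N).Adj (.inr i) (.inr j) :=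
  id

lemma neighborSet_inr (i : Fin N) : (caterpillar N).neighborSet (.inr i) = {.inl i} := by
  ext (j | j) <;> simp [eq_comm]

lemma connected (hN : 0 < N) : (caterpillar N).Connected := by
  have hspine : ∀ i : Fin N, (caterpillar N).Reachable (.inl i) (.inl ⟨0, hN⟩) := by
    rintro ⟨i, hi⟩
    induction i with
    | zero => rfl
    | succ i ih =>
      exact (show (caterpillar N).Adj (.inl ⟨i + 1, hi⟩) (.inl ⟨i, by omega⟩) by simp)
        |>.reachable.trans (ih (by omega))
  have hall : ∀ x, (caterpillar N).Reachable x (.inl ⟨0, hN⟩) := by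
    rintro (i | i)
    exacts [hspine i, (show (caterpillar N).Adj (.inr i) (.inl i) by simp).reachable.trans
      (hspine i)]
  have : Nonempty (Fin N ⊕ Fin N) := ⟨.inl ⟨0, hN⟩⟩
  exact ⟨fun x y => (hall x).trans (hall y).symm⟩

lemma isAcyclic : (caterpillar N).IsAcyclic := by
  have hspine : ∀ i j : Fin N, (i : ℕ) + 1 = j → (caterpillar N).IsBridge s(.inl i, .inl j) := by
    intro i j hij
    refine isBridge_of_forall_cross (S := {x | (Sum.elim id id x : Fin N) ≤ i}) (le_refl i)
      (by simp only [Set.mem_ofPred_eq, Sum.elim_inl, id, Fin.le_def]; omega) ?_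
    rintro (k | k) (l | l) hkl hk hl <;>
      simp only [Set.mem_ofPred_eq, Sum.elim_inl, Sum.elim_inr, id, Fin.le_def] at hk hl
    · obtain rfl : k = i := Fin.ext (by simp at hkl; omega)
      obtain rfl : l = j := Fin.ext (by simp at hkl; omega)
      rfl
    · exact absurd (hkl : k = l) (by rintro rfl; omega)
    · exact absurd (hkl : k = l) (by rintro rfl; omega)
    · exact absurd hkl not_adj_inr_inr
  have hleg : ∀ i : Fin N, (caterpillar N).IsBridge s(.inr i, .inl i) := by
    intro i
    refine isBridge_of_forall_cross (S := {.inr i}) rfl (by simp) ?_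
    rintro (k | k) (l | l) hkl hk hl <;> simp_all
  refine isAcyclic_iff_forall_adj_isBridge.mpr ?_
  rintro (i | i) (j | j) h
  · rcases h with h | h
    exacts [hspine i j h, Sym2.eq_swap ▸ hspine j i h]
  · obtain rfl : i = j := h
    exact Sym2.eq_swap ▸ hleg i
  · obtain rfl : i = j := h
    exact hleg i
  · exact absurd h not_adj_inr_inr

lemma ncard_neighborSet_le_three (x : Fin N ⊕ Fin N) :
    ((caterpillar N).neighborSet x).ncard ≤ 3 := by
  classical
  rcases x with i | i
  · have hsub : (caterpillar N).neighborSet (.inl i) ⊆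
        (({.inr i, .inl ⟨i - 1, by omega⟩, .inl ⟨min (i + 1) (N - 1), by omega⟩} :
          Finset (Fin N ⊕ Fin N)) : Set (Fin N ⊕ Fin N)) := by
      rintro (j | j) h
      · simp_all [Fin.ext_iff]; omega
      · simp_all
    exact (Set.ncard_le_ncard hsub).trans ((Set.ncard_coe_finset _).trans_le Finset.card_le_three)
  · simp [neighborSet_inr]

lemma two_le_ncard_neighborSet_inl (hN : 2 ≤ N) (i : Fin N) :
    2 ≤ ((caterpillar N).neighborSet (.inl i)).ncard := by
  obtain ⟨j, hij⟩ : ∃ j : Fin N, (i : ℕ) + 1 = j ∨ (j : ℕ) + 1 = i := by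
    by_cases h : (i : ℕ) + 1 < N
    exacts [⟨⟨i + 1, h⟩, Or.inl rfl⟩, ⟨⟨i - 1, by omega⟩, Or.inr (by simp; omega)⟩]
  exact (Set.one_lt_ncard_iff (Set.toFinite _)).mpr
    ⟨.inr i, .inl j, by simp, by simpa using hij, by simp⟩

end caterpillar

lemma BranchDecomp.nonempty [Finite V] (G : SimpleGraph V) (hV : 2 ≤ Nat.card V) :
    Nonempty (BranchDecomp G) := by
  let e := Finite.equivFin V
  refine ⟨⟨_, caterpillar (Nat.card V), inferInstance, caterpillar.connected (by omega),
    caterpillar.isAcyclic, caterpillar.ncard_neighborSet_le_three, fun v => .inr (e v),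
    fun u v h => e.injective (Sum.inr_injective h), fun v => by
      simp [caterpillar.neighborSet_inr], ?_⟩⟩
  rintro (i | i) hi
  · have := caterpillar.two_le_ncard_neighborSet_inl hV i
    omega
  · exact ⟨e.symm i, by simp⟩

theorem le_mimw_of_forall_balanced {V : Type*} [Finite V] {G : SimpleGraph V} {t : ℕ}
    (hV : 2 ≤ Nat.card V)
    (h : ∀ X : Set V, Nat.card V ≤ 3 * X.ncard → Nat.card V ≤ 3 * Xᶜ.ncard →
      t ≤ cutmim G X Xᶜ) :
    t ≤ mimw G := by
  obtain ⟨B₀⟩ := BranchDecomp.nonempty G hV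
  refine le_csInf ⟨_, B₀, rfl⟩ ?_
  rintro _ ⟨B, rfl⟩
  obtain ⟨a, b, hab, hX, hXc⟩ := B.exists_balanced_edge hV
  refine (h _ hX hXc).trans (le_csSup ⟨Nat.card (V × V), ?_⟩ ⟨a, b, hab, rfl⟩)
  rintro _ ⟨-, -, -, rfl⟩
  exact cutmim_le_natCard _ _

lemma wallPre_adj {h r : ℕ} {a b : Fin h × Fin (2 * r)} :
    (wallPre h r).Adj a b ↔ a ≠ b ∧
      ((a.1 = b.1 ∧ (a.2 : ℕ) + 1 = b.2) ∨ (a.1 = b.1 ∧ (b.2 : ℕ) + 1 = a.2) ∨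
        (a.2 = b.2 ∧ (a.1 : ℕ) + 1 = b.1 ∧ (a.1 : ℕ) % 2 = (a.2 : ℕ) % 2) ∨
        (a.2 = b.2 ∧ (b.1 : ℕ) + 1 = a.1 ∧ (b.1 : ℕ) % 2 = (b.2 : ℕ) % 2)) := by
  rw [wallPre, fromRel_adj]
  constructor <;> rintro ⟨hne, h⟩ <;> refine ⟨hne, ?_⟩ <;> aesop

lemma wallPre_ncard_neighborSet_ne_one {n i j : ℕ} (hi : i < n) (hj : 1 ≤ j ∧ j + 2 ≤ 2 * n) :
    ((wallPre n n).neighborSet (⟨i, hi⟩, ⟨j, by omega⟩)).ncard ≠ 1 := by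
  have h2 : 1 < ((wallPre n n).neighborSet (⟨i, hi⟩, ⟨j, by omega⟩)).ncard :=
    (Set.one_lt_ncard_iff (Set.toFinite _)).mpr
      ⟨(⟨i, hi⟩, ⟨j - 1, by omega⟩), (⟨i, hi⟩, ⟨j + 1, by omega⟩),
        wallPre_adj.mpr ⟨by simp [Prod.ext_iff]; omega, by simp; omega⟩,
        wallPre_adj.mpr ⟨by simp [Prod.ext_iff], by simp⟩, by simp [Prod.ext_iff]⟩
  omega

abbrev WallVertex (n : ℕ) := {v : Fin n × Fin (2 * n) // ((wallPre n n).neighborSet v).ncard ≠ 1}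

namespace WallVertex

variable {n : ℕ}

def row (v : WallVertex n) : ℕ := v.1.1

def col (v : WallVertex n) : ℕ := v.1.2

-- Grid points off columns `0` and `2n - 1` have two horizontal neighbours: all are wall vertices.
def IsInterior (v : WallVertex n) : Prop := 1 ≤ v.col ∧ v.col + 2 ≤ 2 * n

def mkInterior (i j : ℕ) (hi : i < n) (hj : 1 ≤ j ∧ j + 2 ≤ 2 * n) : WallVertex n :=
  ⟨(⟨i, hi⟩, ⟨j, by omega⟩), wallPre_ncard_neighborSet_ne_one hi hj⟩

@[simp] lemma row_mkInterior {i j : ℕ} (hi : i < n) (hj : 1 ≤ j ∧ j + 2 ≤ 2 * n) :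
    (mkInterior i j hi hj).row = i := rfl

@[simp] lemma col_mkInterior {i j : ℕ} (hi : i < n) (hj : 1 ≤ j ∧ j + 2 ≤ 2 * n) :
    (mkInterior i j hi hj).col = j := rfl

lemma isInterior_mkInterior {i j : ℕ} (hi : i < n) (hj : 1 ≤ j ∧ j + 2 ≤ 2 * n) :
    (mkInterior i j hi hj).IsInterior := hj

lemma row_lt (v : WallVertex n) : v.row < n := v.1.1.isLt

lemma col_lt (v : WallVertex n) : v.col < 2 * n := v.1.2.isLt

lemma ext_row_col {u v : WallVertex n} (hr : u.row = v.row) (hc : u.col = v.col) : u = v :=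
  Subtype.ext (Prod.ext (Fin.ext hr) (Fin.ext hc))

lemma adj_iff {u v : WallVertex n} : (elementaryWall n n).Adj u v ↔ u ≠ v ∧
    ((u.row = v.row ∧ u.col + 1 = v.col) ∨ (u.row = v.row ∧ v.col + 1 = u.col) ∨
      (u.col = v.col ∧ u.row + 1 = v.row ∧ u.row % 2 = u.col % 2) ∨
      (u.col = v.col ∧ v.row + 1 = u.row ∧ v.row % 2 = v.col % 2)) := by
  simp only [elementaryWall, comap_adj, Function.Embedding.subtype_apply, wallPre_adj, ne_eq,
    Subtype.ext_iff, row, col, Fin.ext_iff]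

lemma adj_of_row_eq {u v : WallVertex n} (hr : u.row = v.row) (hc : u.col + 1 = v.col) :
    (elementaryWall n n).Adj u v :=
  adj_iff.mpr ⟨fun h => by subst h; omega, Or.inl ⟨hr, hc⟩⟩

lemma adj_of_col_eq {u v : WallVertex n} (hc : u.col = v.col) (hr : u.row + 1 = v.row)
    (hpar : u.row % 2 = u.col % 2) : (elementaryWall n n).Adj u v :=
  adj_iff.mpr ⟨fun h => by subst h; omega, Or.inr (Or.inr (Or.inl ⟨hc, hr, hpar⟩))⟩

lemma ne_and_not_adj_of_far {u v : WallVertex n} (h : u.row + 2 ≤ v.row ∨ u.col + 2 ≤ v.col) :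
    u ≠ v ∧ ¬(elementaryWall n n).Adj u v :=
  ⟨fun huv => by subst huv; omega, fun hadj => by rw [adj_iff] at hadj; omega⟩

lemma le_natCard : n * (2 * n - 2) ≤ Nat.card (WallVertex n) := by
  classical
  let box : Finset (ℕ × ℕ) := Finset.range n ×ˢ Finset.Icc 1 (2 * n - 2)
  have hbox : (box : Set (ℕ × ℕ)) ⊆ (fun v : WallVertex n => (v.row, v.col)) '' Set.univ := by
    rintro ⟨i, j⟩ h
    simp only [box, Finset.coe_product, Set.mem_prod, Finset.mem_coe, Finset.mem_range,
      Finset.mem_Icc] at h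
    exact ⟨mkInterior i j h.1 (by omega), trivial, rfl⟩
  calc n * (2 * n - 2) = (box : Set (ℕ × ℕ)).ncard := by simp [box]
    _ ≤ _ := Set.ncard_le_ncard hbox
    _ ≤ (Set.univ : Set (WallVertex n)).ncard := Set.ncard_image_le
    _ = _ := Set.ncard_univ _

lemma ncard_row_mem_or_not_isInterior_le (M : Finset ℕ) :
    {v : WallVertex n | v.row ∈ M ∨ ¬v.IsInterior}.ncard ≤ (M.card + 1) * (2 * n) := by
  classical
  let S : Finset (ℕ × ℕ) := M ×ˢ Finset.range (2 * n) ∪ Finset.range n ×ˢ {0, 2 * n - 1}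
  have hmaps : ∀ v ∈ {v : WallVertex n | v.row ∈ M ∨ ¬v.IsInterior},
      (v.row, v.col) ∈ (S : Set (ℕ × ℕ)) := by
    rintro v (hv | hv)
    · simp [S, hv, v.col_lt]
    · have := v.col_lt
      simp only [IsInterior] at hv
      simp [S, v.row_lt]
      omega
  have hinj : Set.InjOn (fun v : WallVertex n => (v.row, v.col)) Set.univ :=
    fun u _ v _ h => ext_row_col (congrArg Prod.fst h) (congrArg Prod.snd h)
  calc _ ≤ (S : Set (ℕ × ℕ)).ncard :=
        Set.ncard_le_ncard_of_injOn _ hmaps (hinj.mono (Set.subset_univ _))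
    _ ≤ M.card * (2 * n) + n * 2 := by
        rw [Set.ncard_coe_finset]
        refine (Finset.card_union_le _ _).trans (add_le_add (by simp) ?_)
        rw [Finset.card_product, Finset.card_range]
        exact Nat.mul_le_mul_left _ Finset.card_le_two
    _ ≤ _ := by nlinarith

section Rows

variable (X : Set (WallVertex n))

def RowMixed (r : ℕ) : Prop :=
  ∃ u v : WallVertex n, u.IsInterior ∧ v.IsInterior ∧ u.row = r ∧ v.row = r ∧ ¬(u ∈ X ↔ v ∈ X)

def RowSubset (r : ℕ) : Prop := r < n ∧ ∀ v : WallVertex n, v.IsInterior → v.row = r → v ∈ X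

variable {X}

lemma rowMixed_compl {r : ℕ} : RowMixed Xᶜ r ↔ RowMixed X r := by
  simp [RowMixed, not_iff_not]

lemma rowMixed_of_not_rowSubset {r : ℕ} (hr : r < n) (hX : ¬RowSubset X r)
    (hXc : ¬RowSubset Xᶜ r) : RowMixed X r := by
  simp only [RowSubset, hr, true_and, not_forall] at hX hXc
  obtain ⟨u, hu, rfl, hu'⟩ := hXc
  obtain ⟨v, hv, hvr, hv'⟩ := hX
  exact ⟨u, v, hu, hv, rfl, hvr, by simp_all⟩

lemma exists_crossing_edge_of_rowMixed {r : ℕ} (h : RowMixed X r) :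
    ∃ u w, (elementaryWall n n).Adj u w ∧ ¬(u ∈ X ↔ w ∈ X) ∧
      ∀ x ∈ ({u, w} : Set (WallVertex n)), x.row = r := by
  obtain ⟨u, v, hu, hv, hur, hvr, huv⟩ := h
  wlog hcol : u.col ≤ v.col generalizing u v
  · exact this v u hv hu hvr hur (fun h => huv h.symm) (by omega)
  let f : ℕ → WallVertex n := fun k =>
    mkInterior r (min (u.col + k) v.col) (hur ▸ u.row_lt)
      (by simp only [IsInterior] at hu hv; omega)
  have hf0 : f 0 = u := ext_row_col hur.symm (by simp [f, hcol])
  have hfm : f (v.col - u.col) = v := ext_row_col hvr.symm (by simp [f]; omega)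
  obtain ⟨k, hk, hflip⟩ := Nat.exists_flip_of_not_iff (p := (f · ∈ X)) (m := v.col - u.col)
    (by rwa [hf0, hfm])
  refine ⟨f k, f (k + 1), adj_of_row_eq rfl (by simp [f]; omega), hflip, ?_⟩
  rintro x (rfl | rfl) <;> rfl

lemma exists_crossing_edge_of_opposite_rows {lo hi c : ℕ} (hlo : lo < hi) (hhi : hi < n)
    (hopp : ∀ u w : WallVertex n, u.IsInterior → w.IsInterior → u.row = lo → w.row = hi →
      ¬(u ∈ X ↔ w ∈ X))
    (hc : 1 ≤ c) (hpar : c % 2 = lo % 2) (hcd : c + (hi - lo) + 2 ≤ 2 * n) :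
    ∃ u w, (elementaryWall n n).Adj u w ∧ ¬(u ∈ X ↔ w ∈ X) ∧
      ∀ x ∈ ({u, w} : Set (WallVertex n)), c ≤ x.col ∧ x.col ≤ c + (hi - lo) := by
  -- a staircase from row `lo` to row `hi`, alternating vertical and horizontal steps
  let f : ℕ → WallVertex n := fun m =>
    mkInterior (lo + (min m (2 * (hi - lo)) + 1) / 2) (c + min m (2 * (hi - lo)) / 2)
      (by omega) (by omega)
  have hrow : ∀ m ≤ 2 * (hi - lo), (f m).row = lo + (m + 1) / 2 := fun m hm => by
    simp [f, min_eq_left hm]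
  have hcol : ∀ m ≤ 2 * (hi - lo), (f m).col = c + m / 2 := fun m hm => by
    simp [f, min_eq_left hm]
  obtain ⟨m, hm, hflip⟩ := Nat.exists_flip_of_not_iff (p := (f · ∈ X))
    (m := 2 * (hi - lo)) (hopp _ _ (isInterior_mkInterior _ _) (isInterior_mkInterior _ _)
      (by simp [hrow]) (by rw [hrow _ le_rfl]; omega))
  have h0 := hrow m hm.le
  have h1 := hrow (m + 1) hm
  have h2 := hcol m hm.le
  have h3 := hcol (m + 1) hm
  refine ⟨f m, f (m + 1), ?_, hflip, ?_⟩
  · rcases Nat.even_or_odd m with ⟨q, rfl⟩ | ⟨q, rfl⟩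
    · exact adj_of_col_eq (by omega) (by omega) (by omega)
    · exact adj_of_row_eq (by omega) (by omega)
  · rintro x (rfl | rfl) <;> omega

lemma exists_rowSubset_of_few_rowMixed (M : Finset ℕ) (hM : ∀ r < n, RowMixed X r → r ∈ M)
    (hfew : 3 * ((M.card + 1) * (2 * n)) < n * (2 * n - 2))
    (hX : Nat.card (WallVertex n) ≤ 3 * X.ncard) : ∃ r, RowSubset X r := by
  by_contra! hnone
  have hsub : X ⊆ {v | v.row ∈ M ∨ ¬v.IsInterior} := fun v hv => by
    show v.row ∈ M ∨ ¬v.IsInterior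
    by_contra! h
    exact h.1 (hM _ v.row_lt
      (rowMixed_of_not_rowSubset v.row_lt (hnone _) fun hc => hc.2 v h.2 rfl hv))
  have := (Set.ncard_le_ncard hsub).trans (ncard_row_mem_or_not_isInterior_le M)
  have := le_natCard (n := n)
  omega

lemma le_cutmim_of_rowMixed {t : ℕ} (M : Finset ℕ) (hM : ∀ r ∈ M, RowMixed X r)
    (ht : 2 * t ≤ M.card + 1) : t ≤ cutmim (elementaryWall n n) X Xᶜ := by
  obtain ⟨r, hrM, hr⟩ := M.exists_sparse_family ht
  choose u w hadj hcross hrow using fun k => exists_crossing_edge_of_rowMixed (hM _ (hrM k))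
  exact le_cutmim_of_crossing_edges u w hadj hcross fun k l hkl x hx y hy =>
    ne_and_not_adj_of_far (Or.inl (by rw [hrow k x hx, hrow l y hy]; exact hr k l hkl))

lemma le_cutmim_of_opposite_rows {lo hi t : ℕ} (hlo : lo < hi) (hhi : hi < n)
    (hopp : ∀ u w : WallVertex n, u.IsInterior → w.IsInterior → u.row = lo → w.row = hi →
      ¬(u ∈ X ↔ w ∈ X))
    (hd : hi - lo + 1 ≤ 2 * t) (hn : 2 * t * t + 2 * t + 1 ≤ 2 * n) :
    t ≤ cutmim (elementaryWall n n) X Xᶜ := by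
  have ht : 2 * t * t = 2 * (t * t) := by ring
  have hck : ∀ k : Fin t, (t + 1) * k + 1 ≤ t * t := fun k => by
    have := Nat.mul_le_mul_left (t + 1) (show (k : ℕ) + 1 ≤ t from k.isLt)
    nlinarith
  have hcl : ∀ k l : Fin t, k < l → (t + 1) * k + t + 1 ≤ (t + 1) * l := fun k l hkl => by
    have := Nat.mul_le_mul_left (t + 1) (show (k : ℕ) + 1 ≤ l from hkl)
    nlinarith
  -- each staircase spans at most `2t` columns, so staircases `2t + 2` columns apart are far
  choose u w hadj hcross hcol using fun k : Fin t =>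
    exists_crossing_edge_of_opposite_rows (c := 2 - lo % 2 + 2 * ((t + 1) * k)) hlo hhi hopp
      (by omega) (by omega) (by have := hck k; omega)
  refine le_cutmim_of_crossing_edges u w hadj hcross fun k l hkl x hx y hy =>
    ne_and_not_adj_of_far (Or.inr ?_)
  have := hcol k x hx
  have := hcol l y hy
  have := hcl k l hkl
  omega

end Rows

theorem le_cutmim_of_balanced {t : ℕ} (hcols : 2 * t * t + 2 * t + 1 ≤ 2 * n)
    (hrows : 6 * t < n + 2) (X : Set (WallVertex n))
    (hX : Nat.card (WallVertex n) ≤ 3 * X.ncard) (hXc : Nat.card (WallVertex n) ≤ 3 * Xᶜ.ncard) :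
    t ≤ cutmim (elementaryWall n n) X Xᶜ := by
  classical
  let M := (Finset.range n).filter (RowMixed X)
  have hM : ∀ r, r ∈ M ↔ r < n ∧ RowMixed X r := by simp [M]
  by_cases hmany : 2 * t ≤ M.card + 1
  · exact le_cutmim_of_rowMixed M (fun r hr => ((hM r).mp hr).2) hmany
  have hmix : ∀ r < n, RowMixed X r → r ∈ M := fun r hr h => (hM r).mpr ⟨hr, h⟩
  have hfew : 3 * ((M.card + 1) * (2 * n)) < n * (2 * n - 2) :=
    calc 3 * ((M.card + 1) * (2 * n)) = n * (6 * (M.card + 1)) := by ring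
      _ < n * (2 * n - 2) := Nat.mul_lt_mul_of_pos_left (by omega) (by omega)
  obtain ⟨p, hp⟩ := exists_rowSubset_of_few_rowMixed M hmix hfew hX
  obtain ⟨q, hq⟩ := exists_rowSubset_of_few_rowMixed (X := Xᶜ) M
    (fun r hr h => hmix r hr (rowMixed_compl.mp h)) hfew hXc
  obtain ⟨p, q, hp, hq, hbetween⟩ := Nat.exists_close_pair ⟨p, hp⟩ ⟨q, hq⟩
  have hpq : p ≠ q := by
    rintro rfl
    let v : WallVertex n := mkInterior p 1 hp.1 (by omega)
    exact hq.2 v (isInterior_mkInterior _ _) rfl (hp.2 v (isInterior_mkInterior _ _) rfl)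
  have hgap : max p q - min p q - 1 ≤ M.card := by
    have := hp.1
    have := hq.1
    rw [← Nat.card_Ioo]
    refine Finset.card_le_card fun r hr => ?_
    rw [Finset.mem_Ioo] at hr
    exact hmix r (by omega) (rowMixed_of_not_rowSubset (by omega) (hbetween r hr.1 hr.2).1
      (hbetween r hr.1 hr.2).2)
  rcases lt_or_gt_of_ne hpq with hlt | hlt
  · exact le_cutmim_of_opposite_rows hlt hq.1
      (fun u w hu hw hur hwr h => hq.2 w hw hwr (h.mp (hp.2 u hu hur))) (by omega) hcols
  · exact le_cutmim_of_opposite_rows hlt hp.1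
      (fun u w hu hw hur hwr h => hq.2 u hu hur (h.mpr (hp.2 w hw hwr))) (by omega) hcols

end WallVertex

lemma nat_bounds_of_lt_sqrt_div_fifty_add_one {n t : ℕ} (hn : 7 ≤ n)
    (ht : (t : ℝ) < √n / 50 + 1) :
    2 * t * t + 2 * t + 1 ≤ 2 * n ∧ 6 * t < n + 2 := by
  have hs : √(n : ℝ) ^ 2 = n := Real.sq_sqrt (Nat.cast_nonneg n)
  have hs0 := Real.sqrt_nonneg (n : ℝ)
  have hn' : (7 : ℝ) ≤ n := by exact_mod_cast hn
  have ht0 : (0 : ℝ) ≤ t := Nat.cast_nonneg t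
  have hs2 : 2 ≤ √(n : ℝ) := by nlinarith
  constructor
  · have : (2 * t * t + 2 * t + 1 : ℝ) ≤ 2 * n := by nlinarith [mul_lt_mul'' ht ht ht0 ht0]
    exact_mod_cast this
  · have : (6 * t : ℝ) < n + 2 := by nlinarith
    exact_mod_cast this

/-- The elementary `(n × n)`-wall with `n ≥ 7` has mim-width at least
`√n / 50`. -/
theorem wall_mimw (n : ℕ) (hn : 7 ≤ n) :
    Real.sqrt n / 50 ≤ (mimw (elementaryWall n n) : ℝ) := by
  set t := ⌈√(n : ℝ) / 50⌉₊
  obtain ⟨hcols, hrows⟩ :=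
    nat_bounds_of_lt_sqrt_div_fifty_add_one hn (Nat.ceil_lt_add_one (by positivity))
  have hV : 2 ≤ Nat.card (WallVertex n) :=
    WallVertex.le_natCard.trans' (by nlinarith [Nat.sub_add_cancel (by omega : 2 ≤ 2 * n)])
  calc √(n : ℝ) / 50 ≤ t := Nat.le_ceil _
    _ ≤ mimw (elementaryWall n n) := by
      exact_mod_cast le_mimw_of_forall_balanced hV fun X hX hXc =>
        WallVertex.le_cutmim_of_balanced hcols hrows X hX hXc
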